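/- Let L be a second-order Lagrangian and let f = (f^α_I)_{α,|I|=2} be a smooth map assigning to each (x, u, u_i, p^I) ∈ ℝ^m × ℝ^n × (ℝ^n)^m × (ℝ^n)^{s₂} a point f(x,u,u_i,p^I) ∈ (ℝ^n)^{s₂} which is a two-sided inverse of the fiber derivative of L in the highest-order velocities, i.e. (∂L/∂u^α_K)(x,u,u_i,f(x,u,u_i,p^I)) = p^K_α for all arguments, and f^α_I(x,u,u_i,((∂L/∂u^β_K)(x,u,u_i,w))_{β,K}) = w^α_I for all (x,u,u_i,w). Define H(x,u,u_i,p^i,p^I) := Σ_{α,i} p^i_α u^α_i + Σ_{α,|I|=2} p^I_α f^α_I(x,u,u_i,p^I) − L(x,u,u_i,f(x,u,u_i,p^I)). Then a smooth map φ : ℝ^m → ℝ^n satisfies the Euler–Lagrange field equations of L if and only if there exist smooth functions u^α_i, p^i_α, p^I_α : ℝ^m → ℝ such that, with u := φ and all partial derivatives of H evaluated at (x, u(x), u_i(x), p^i(x), p^I(x)), the Hamilton–De Donder–Weyl equations hold on ℝ^m: ∂u^α/∂x^i = ∂H/∂p^i_α; Σ_{1_i+1_j = I} (1/n(ij)) ∂u^α_i/∂x^j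 = ∂H/∂p^I_α for each |I| = 2; Σ_{i=1}^m ∂p^i_α/∂x^i = −∂H/∂u^α; and Σ_{j=1}^m (1/n(ij)) ∂p^{1_i+1_j}_α/∂x^j = −∂H/∂u^α_i. -/

import Mathlib

open scoped BigOperators

noncomputable section

/-- Multi-indices on `Fin m` of total degree `k`. -/
abbrev Idx (m k : ℕ) : Type := { I : Fin m → ℕ // ∑ i, I i = k }

instance (m k : ℕ) : Fintype (Idx m k) :=
  Fintype.subtype (Finset.Nat.antidiagonalTuple m k) fun _ =>
    Finset.Nat.mem_antidiagonalTuple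

/-- The multi-index `1_i + 1_j`. -/
def idx2 {m : ℕ} (i j : Fin m) : Idx m 2 :=
  ⟨Pi.single i 1 + Pi.single j 1, by
    simp [Finset.sum_add_distrib, Finset.sum_pi_single']⟩

/-- The multi-index `I + 1_j`. -/
def Idx.succ {m k : ℕ} (I : Idx m k) (j : Fin m) : Idx m (k + 1) :=
  ⟨I.1 + Pi.single j 1, by
    simp [Finset.sum_add_distrib, I.2, Finset.sum_pi_single']⟩

/-- The combinatorial factor `n(ij)`. -/
def nij {m : ℕ} (i j : Fin m) : ℝ := if i = j then 1 else 2

/-- Partial derivative of `f : ℝ^m → ℝ` in the `i`-th coordinate direction. -/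
def pd {m : ℕ} (i : Fin m) (f : (Fin m → ℝ) → ℝ) : (Fin m → ℝ) → ℝ :=
  fun x => fderiv ℝ f x (Pi.single i 1)

/-- Iterated partial derivative `∂^I` associated to a multi-index `I`. -/
def pdI {m : ℕ} (I : Fin m → ℕ) (f : (Fin m → ℝ) → ℝ) : (Fin m → ℝ) → ℝ :=
  (List.finRange m).foldr (fun i g => (pd i)^[I i] g) f

/-- Second-order jet coordinate space: coordinates `(xⁱ, uᵅ, uᵅᵢ, uᵅ_I)`, `|I| = 2`. -/
abbrev J2 (m n : ℕ) : Type :=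
  (Fin m → ℝ) × (Fin n → ℝ) × (Fin m → Fin n → ℝ) × (Idx m 2 → Fin n → ℝ)

/-- Third-order jet coordinate space: additionally `uᵅ_J`, `|J| = 3`. -/
abbrev J3 (m n : ℕ) : Type :=
  (Fin m → ℝ) × (Fin n → ℝ) × (Fin m → Fin n → ℝ) × (Idx m 2 → Fin n → ℝ) ×
    (Idx m 3 → Fin n → ℝ)

/-- Projection from third-order to second-order jet coordinates. -/
def π32 {m n : ℕ} (w : J3 m n) : J2 m n := (w.1, w.2.1, w.2.2.1, w.2.2.2.1)

/-- Second jet prolongation of `φ : ℝ^m → ℝ^n`. -/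
def jet2 {m n : ℕ} (φ : (Fin m → ℝ) → Fin n → ℝ) (x : Fin m → ℝ) : J2 m n :=
  (x, φ x, fun i α => pd i (fun y => φ y α) x, fun I α => pdI I.1 (fun y => φ y α) x)

/-- Third jet prolongation of `φ : ℝ^m → ℝ^n`. -/
def jet3 {m n : ℕ} (φ : (Fin m → ℝ) → Fin n → ℝ) (x : Fin m → ℝ) : J3 m n :=
  (x, φ x, fun i α => pd i (fun y => φ y α) x,
    fun I α => pdI I.1 (fun y => φ y α) x,
    fun J α => pdI J.1 (fun y => φ y α) x)

/-- Coordinate direction `∂/∂xʲ` in `J2`. -/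
def eX {m n : ℕ} (j : Fin m) : J2 m n := (Pi.single j 1, 0, 0, 0)
/-- Coordinate direction `∂/∂uᵅ` in `J2`. -/
def eU {m n : ℕ} (α : Fin n) : J2 m n := (0, Pi.single α 1, 0, 0)
/-- Coordinate direction `∂/∂uᵅᵢ` in `J2`. -/
def eU1 {m n : ℕ} (i : Fin m) (α : Fin n) : J2 m n :=
  (0, 0, Pi.single i (Pi.single α 1), 0)
/-- Coordinate direction `∂/∂uᵅ_I` in `J2`. -/
def eU2 {m n : ℕ} (I : Idx m 2) (α : Fin n) : J2 m n :=
  (0, 0, 0, Pi.single I (Pi.single α 1))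

/-- Partial derivative `∂G/∂xʲ` of a function of the second-order jet coordinates. -/
def dX {m n : ℕ} (j : Fin m) (G : J2 m n → ℝ) : J2 m n → ℝ :=
  fun a => fderiv ℝ G a (eX j)
/-- Partial derivative `∂G/∂uᵅ`. -/
def dU {m n : ℕ} (α : Fin n) (G : J2 m n → ℝ) : J2 m n → ℝ :=
  fun a => fderiv ℝ G a (eU α)
/-- Partial derivative `∂G/∂uᵅᵢ`. -/
def dU1 {m n : ℕ} (i : Fin m) (α : Fin n) (G : J2 m n → ℝ) : J2 m n → ℝ :=
  fun a => fderiv ℝ G a (eU1 i α)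
/-- Partial derivative `∂G/∂uᵅ_I`, `|I| = 2`. -/
def dU2 {m n : ℕ} (I : Idx m 2) (α : Fin n) (G : J2 m n → ℝ) : J2 m n → ℝ :=
  fun a => fderiv ℝ G a (eU2 I α)

/-- Coordinate total derivative `D_j G`, a function of the third-order jet coordinates. -/
def totalD {m n : ℕ} (j : Fin m) (G : J2 m n → ℝ) : J3 m n → ℝ := fun w =>
  dX j G (π32 w) + (∑ α, w.2.2.1 j α * dU α G (π32 w))
    + (∑ α, ∑ i, w.2.2.2.1 (idx2 i j) α * dU1 i α G (π32 w))
    + (∑ α, ∑ I : Idx m 2, w.2.2.2.2 (Idx.succ I j) α * dU2 I α G (π32 w))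

/-- The first-order momentum components `pⁱᵅ` of the restricted Legendre map. -/
def FLp1 {m n : ℕ} (L : J2 m n → ℝ) (i : Fin m) (α : Fin n) : J3 m n → ℝ := fun w =>
  dU1 i α L (π32 w) - ∑ j, (nij i j)⁻¹ * totalD j (dU2 (idx2 i j) α L) w

/-- Euler–Lagrange expression of a second-order Lagrangian `L` at `φ`. -/
def EL {m n : ℕ} (L : J2 m n → ℝ) (φ : (Fin m → ℝ) → Fin n → ℝ) (α : Fin n) :
    (Fin m → ℝ) → ℝ := fun x =>
  dU α L (jet2 φ x)
    - (∑ i, pd i (fun y => dU1 i α L (jet2 φ y)) x)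
    + ∑ I : Idx m 2, pdI I.1 (fun y => dU2 I α L (jet2 φ y)) x

/-- The multimomentum phase space coordinates `(xⁱ, uᵅ, uᵅᵢ, pⁱᵅ, p^Iᵅ)`. -/
abbrev Pb (m n : ℕ) : Type :=
  (Fin m → ℝ) × (Fin n → ℝ) × (Fin m → Fin n → ℝ) × (Fin m → Fin n → ℝ) ×
    (Idx m 2 → Fin n → ℝ)

/-- Arguments `(x, u, uᵢ, p^I)` of the fiber-inverse map `f`. -/
abbrev Pf (m n : ℕ) : Type :=
  (Fin m → ℝ) × (Fin n → ℝ) × (Fin m → Fin n → ℝ) × (Idx m 2 → Fin n → ℝ)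

/-- Coordinate direction `∂/∂uᵅ` in `Pb`. -/
def ePU {m n : ℕ} (α : Fin n) : Pb m n := (0, Pi.single α 1, 0, 0, 0)
/-- Coordinate direction `∂/∂uᵅᵢ` in `Pb`. -/
def ePU1 {m n : ℕ} (i : Fin m) (α : Fin n) : Pb m n :=
  (0, 0, Pi.single i (Pi.single α 1), 0, 0)
/-- Coordinate direction `∂/∂pⁱᵅ` in `Pb`. -/
def eP1 {m n : ℕ} (i : Fin m) (α : Fin n) : Pb m n :=
  (0, 0, 0, Pi.single i (Pi.single α 1), 0)
/-- Coordinate direction `∂/∂p^Iᵅ` in `Pb`. -/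
def eP2 {m n : ℕ} (I : Idx m 2) (α : Fin n) : Pb m n :=
  (0, 0, 0, 0, Pi.single I (Pi.single α 1))

/-- The local Hamiltonian function
`H = Σ pⁱᵅ uᵅᵢ + Σ p^Iᵅ fᵅ_I(x,u,uᵢ,p^I) − L(x, u, uᵢ, f(x,u,uᵢ,p^I))`. -/
def Ham {m n : ℕ} (L : J2 m n → ℝ) (f : Pf m n → (Idx m 2 → Fin n → ℝ)) :
    Pb m n → ℝ := fun v =>
  (∑ α, ∑ i, v.2.2.2.1 i α * v.2.2.1 i α)
    + (∑ α, ∑ I : Idx m 2, v.2.2.2.2 I α * f (v.1, v.2.1, v.2.2.1, v.2.2.2.2) I α)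
    - L (v.1, v.2.1, v.2.2.1, f (v.1, v.2.1, v.2.2.1, v.2.2.2.2))

/-- The section of the phase space determined by `φ` and the component functions
`u₁, p₁, p₂`. -/
def sec {m n : ℕ} (φ : (Fin m → ℝ) → Fin n → ℝ)
    (u1 : Fin m → Fin n → (Fin m → ℝ) → ℝ)
    (p1 : Fin m → Fin n → (Fin m → ℝ) → ℝ)
    (p2 : Idx m 2 → Fin n → (Fin m → ℝ) → ℝ) (x : Fin m → ℝ) : Pb m n :=
  (x, φ x, fun i α => u1 i α x, fun i α => p1 i α x, fun I α => p2 I α x)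

/-!
Along `φ` put `uᵢ := ∂ᵢφ`, `p^I := ∂L/∂u_I ∘ j²φ` and
`pⁱ := ∂L/∂uᵢ − Σⱼ (1/n(ij)) ∂ⱼ (∂L/∂u_{1_i+1_j})`. Because `f` inverts the fiber derivative,
`∂H/∂p^I = f(p^I)` recovers the second derivatives of `φ`, while in `∂H/∂u` and `∂H/∂uᵢ` the
derivative of `f` cancels against `∂L/∂u_I = p^I`. So the first, second and fourth
Hamilton–De Donder–Weyl equations say exactly that the fields are these functions of `φ`, and the
third says `∂L/∂u = Σᵢ ∂ᵢpⁱ`. Every `I` with `|I| = 2` is `1_i + 1_j` for the ordered pairs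
`(i, j), (j, i)`, of total weight `Σ 1/n(ij) = 1`; hence `Σᵢ ∂ᵢpⁱ` is
`Σᵢ ∂ᵢ(∂L/∂uᵢ) − Σ_{|I|=2} ∂^I(∂L/∂u_I)`, and the third equation is the Euler–Lagrange equation.
-/

section MultiIndices

variable {m : ℕ}

lemma Idx.exists_succ_eq {k : ℕ} (I : Idx m (k + 1)) :
    ∃ (J : Idx m k) (j : Fin m), J.succ j = I := by
  obtain ⟨j, -, hj⟩ := Finset.exists_ne_zero_of_sum_ne_zero (I.2.trans_ne k.succ_ne_zero)
  have hle : (Pi.single j 1 : Fin m → ℕ) ≤ I.1 := by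
    intro i
    rcases eq_or_ne i j with rfl | hij
    · simpa [Nat.one_le_iff_ne_zero] using hj
    · simp [hij]
  have hsum : ∑ i, (I.1 - Pi.single j 1 : Fin m → ℕ) i = k := by
    simp only [Pi.sub_apply, Finset.sum_tsub_distrib _ fun i _ => hle i, I.2,
      Finset.sum_pi_single', Finset.mem_univ, if_true, Nat.add_sub_cancel]
  exact ⟨⟨I.1 - Pi.single j 1, hsum⟩, j, Subtype.ext (tsub_add_cancel_of_le hle)⟩

lemma Idx.coe_eq_zero (I : Idx m 0) : I.1 = 0 :=
  funext fun i => Finset.sum_eq_zero_iff.1 I.2 i (Finset.mem_univ i)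

lemma exists_idx2_eq (I : Idx m 2) : ∃ i j, idx2 i j = I := by
  obtain ⟨J, j, rfl⟩ := I.exists_succ_eq
  obtain ⟨J₀, i, rfl⟩ := J.exists_succ_eq
  exact ⟨i, j, Subtype.ext (by simp [idx2, Idx.succ, J₀.coe_eq_zero])⟩

lemma idx2_eq_idx2_iff {i j k l : Fin m} :
    idx2 i j = idx2 k l ↔ (i = k ∧ j = l) ∨ (i = l ∧ j = k) := by
  constructor
  · intro h
    have h' := congrArg Subtype.val h
    have hi := congrFun h' i
    have hj := congrFun h' j
    have hk := congrFun h' k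
    simp only [idx2, Pi.add_apply, Pi.single_apply] at hi hj hk
    grind
  · rintro (⟨rfl, rfl⟩ | ⟨rfl, rfl⟩)
    · rfl
    · exact Subtype.ext (add_comm _ _)

lemma nij_self (i : Fin m) : nij i i = 1 := if_pos rfl

lemma nij_of_ne {i j : Fin m} (h : i ≠ j) : nij i j = 2 := if_neg h

lemma sum_sum_ite_eq_and {M : Type*} [AddCommMonoid M] (c : Fin m → Fin m → M) (a b : Fin m) :
    ∑ i, ∑ j, (if i = a ∧ j = b then c i j else 0) = c a b := by
  simp only [ite_and, Finset.sum_ite_irrel, Finset.sum_ite_eq', Finset.mem_univ, ↓reduceIte,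
    Finset.sum_const_zero]

lemma sum_sum_ite_idx2_eq_inv_nij (I : Idx m 2) :
    ∑ i, ∑ j, (if idx2 i j = I then (nij i j)⁻¹ else 0) = 1 := by
  obtain ⟨a, b, rfl⟩ := exists_idx2_eq I
  simp_rw [idx2_eq_idx2_iff]
  rcases eq_or_ne a b with rfl | hab
  · simp only [or_self, sum_sum_ite_eq_and, nij_self, inv_one]
  · have hsplit : ∀ i j : Fin m,
        (if (i = a ∧ j = b) ∨ (i = b ∧ j = a) then (nij i j)⁻¹ else 0)
          = (if i = a ∧ j = b then (nij i j)⁻¹ else 0)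
            + (if i = b ∧ j = a then (nij i j)⁻¹ else 0) := by
      intro i j
      by_cases h : i = a ∧ j = b
      · simp [h, hab]
      · simp [h]
    simp only [hsplit, Finset.sum_add_distrib, sum_sum_ite_eq_and, nij_of_ne hab,
      nij_of_ne hab.symm]
    norm_num

lemma sum_sum_ite_idx2_eq (I : Idx m 2) {c : Fin m → Fin m → ℝ} {g : Idx m 2 → ℝ}
    (hc : ∀ i j, c i j = g (idx2 i j)) :
    ∑ i, ∑ j, (if idx2 i j = I then (nij i j)⁻¹ * c i j else 0) = g I := by
  calc ∑ i, ∑ j, (if idx2 i j = I then (nij i j)⁻¹ * c i j else 0)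
      = g I * ∑ i, ∑ j, (if idx2 i j = I then (nij i j)⁻¹ else 0) := by
        simp only [Finset.mul_sum, mul_ite, mul_zero]
        refine Finset.sum_congr rfl fun i _ => Finset.sum_congr rfl fun j _ => ?_
        split_ifs with h
        · rw [hc, h, mul_comm]
        · rfl
    _ = g I := by rw [sum_sum_ite_idx2_eq_inv_nij, mul_one]

lemma sum_sum_inv_nij_mul_idx2 (g : Idx m 2 → ℝ) :
    ∑ i, ∑ j, (nij i j)⁻¹ * g (idx2 i j) = ∑ I, g I := by
  calc ∑ i, ∑ j, (nij i j)⁻¹ * g (idx2 i j)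
      = ∑ i, ∑ j, ∑ I, if idx2 i j = I then (nij i j)⁻¹ * g (idx2 i j) else 0 := by
        simp only [Finset.sum_ite_eq, Finset.mem_univ, if_true]
    _ = ∑ I, ∑ i, ∑ j, if idx2 i j = I then (nij i j)⁻¹ * g (idx2 i j) else 0 := by
        simp only [Finset.sum_comm (γ := Idx m 2)]
    _ = ∑ I, g I := Finset.sum_congr rfl fun I _ => sum_sum_ite_idx2_eq I fun _ _ => rfl

end MultiIndices

section PartialDerivatives

variable {m : ℕ}

lemma pd_fun_sub {A B : (Fin m → ℝ) → ℝ} {x : Fin m → ℝ} (hA : DifferentiableAt ℝ A x)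
    (hB : DifferentiableAt ℝ B x) (i : Fin m) :
    pd i (fun y => A y - B y) x = pd i A x - pd i B x := by
  simp [pd, fderiv_fun_sub hA hB]

lemma pd_const_mul {A : (Fin m → ℝ) → ℝ} {x : Fin m → ℝ} (hA : DifferentiableAt ℝ A x)
    (c : ℝ) (i : Fin m) : pd i (fun y => c * A y) x = c * pd i A x := by
  simp [pd, fderiv_const_mul hA c]

lemma pd_fun_sum {ι : Type*} {s : Finset ι} {A : ι → (Fin m → ℝ) → ℝ} {x : Fin m → ℝ}
    (hA : ∀ j ∈ s, DifferentiableAt ℝ (A j) x) (i : Fin m) :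
    pd i (fun y => ∑ j ∈ s, A j y) x = ∑ j ∈ s, pd i (A j) x := by
  simp [pd, fderiv_fun_sum hA]

lemma contDiff_pd {f : (Fin m → ℝ) → ℝ} (hf : ContDiff ℝ (⊤ : ℕ∞) f) (i : Fin m) :
    ContDiff ℝ (⊤ : ℕ∞) (pd i f) :=
  (hf.fderiv_right (by exact_mod_cast le_top)).clm_apply contDiff_const

lemma pd_comm {f : (Fin m → ℝ) → ℝ} (hf : ContDiff ℝ (⊤ : ℕ∞) f) (i j : Fin m) :
    pd i (pd j f) = pd j (pd i f) := by
  funext x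
  have hdf : Differentiable ℝ (fderiv ℝ f) :=
    (hf.fderiv_right (m := 1) (WithTop.coe_le_coe.2 le_top)).differentiable one_ne_zero
  have hsymm := hf.contDiffAt.isSymmSndFDerivAt (x := x)
    (by simpa using WithTop.coe_le_coe.2 (le_top : (2 : ℕ∞) ≤ ⊤))
  have hpd : ∀ i j, pd i (pd j f) x = fderiv ℝ (fderiv ℝ f) x (Pi.single i 1) (Pi.single j 1) :=
    fun i j => by
      change fderiv ℝ (fun y => fderiv ℝ f y (Pi.single j 1)) x (Pi.single i 1) = _
      rw [fderiv_clm_apply (hdf x) (differentiableAt_const _)]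
      simp
  rw [hpd, hpd, hsymm]

lemma contDiff_pd_iterate {f : (Fin m → ℝ) → ℝ} (hf : ContDiff ℝ (⊤ : ℕ∞) f) (i : Fin m)
    (k : ℕ) : ContDiff ℝ (⊤ : ℕ∞) ((pd i)^[k] f) := by
  induction k generalizing f with
  | zero => exact hf
  | succ k ih => exact ih (contDiff_pd hf i)

lemma pd_iterate_pd_comm {f : (Fin m → ℝ) → ℝ} (hf : ContDiff ℝ (⊤ : ℕ∞) f) (i j : Fin m)
    (k : ℕ) : (pd i)^[k] (pd j f) = pd j ((pd i)^[k] f) := by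
  induction k generalizing f with
  | zero => rfl
  | succ k ih =>
    rw [Function.iterate_succ_apply, Function.iterate_succ_apply, pd_comm hf,
      ih (contDiff_pd hf i)]

lemma contDiff_foldr_pd_iterate {f : (Fin m → ℝ) → ℝ} (hf : ContDiff ℝ (⊤ : ℕ∞) f)
    (I : Fin m → ℕ) (l : List (Fin m)) :
    ContDiff ℝ (⊤ : ℕ∞) (l.foldr (fun i g => (pd i)^[I i] g) f) := by
  induction l with
  | nil => exact hf
  | cons a t ih => exact contDiff_pd_iterate ih a (I a)

lemma foldr_pd_iterate_add_single {f : (Fin m → ℝ) → ℝ} (hf : ContDiff ℝ (⊤ : ℕ∞) f)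
    (I : Fin m → ℕ) {j : Fin m} {l : List (Fin m)} (hl : l.Nodup) (hj : j ∈ l) :
    l.foldr (fun i g => (pd i)^[(I + Pi.single j 1 : Fin m → ℕ) i] g) f
      = pd j (l.foldr (fun i g => (pd i)^[I i] g) f) := by
  induction l with
  | nil => simp at hj
  | cons a t ih =>
    obtain ⟨hat, ht⟩ := List.nodup_cons.1 hl
    rcases List.mem_cons.1 hj with rfl | hjt
    · have hsame : ∀ i ∈ t, (I + Pi.single j 1 : Fin m → ℕ) i = I i := fun i hi => by
        simp [ne_of_mem_of_not_mem hi hat]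
      rw [List.foldr_cons, Pi.add_apply, Pi.single_eq_same,
        List.foldr_ext _ _ _ fun i hi _ => by rw [hsame i hi], Function.iterate_succ_apply',
        List.foldr_cons]
    · have haj : a ≠ j := (ne_of_mem_of_not_mem hjt hat).symm
      rw [List.foldr_cons, Pi.add_apply, Pi.single_eq_of_ne haj, add_zero, ih ht hjt,
        List.foldr_cons, pd_iterate_pd_comm (contDiff_foldr_pd_iterate hf I t)]

lemma contDiff_pdI {f : (Fin m → ℝ) → ℝ} (hf : ContDiff ℝ (⊤ : ℕ∞) f) (I : Fin m → ℕ) :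
    ContDiff ℝ (⊤ : ℕ∞) (pdI I f) :=
  contDiff_foldr_pd_iterate hf I _

lemma pdI_add_single {f : (Fin m → ℝ) → ℝ} (hf : ContDiff ℝ (⊤ : ℕ∞) f) (I : Fin m → ℕ)
    (j : Fin m) : pdI (I + Pi.single j 1) f = pd j (pdI I f) :=
  foldr_pd_iterate_add_single hf I (List.nodup_finRange m) (List.mem_finRange j)

lemma pdI_zero (f : (Fin m → ℝ) → ℝ) : pdI (0 : Fin m → ℕ) f = f := by
  simp [pdI]

lemma pdI_idx2 {f : (Fin m → ℝ) → ℝ} (hf : ContDiff ℝ (⊤ : ℕ∞) f) (i j : Fin m) :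
    pdI (idx2 i j).1 f = pd j (pd i f) := by
  calc pdI (idx2 i j).1 f = pdI (0 + Pi.single i 1 + Pi.single j 1) f := by simp [idx2]
    _ = pd j (pd i f) := by rw [pdI_add_single hf, pdI_add_single hf, pdI_zero]

lemma sum_sum_ite_idx2_pd_pd {f : (Fin m → ℝ) → ℝ} (hf : ContDiff ℝ (⊤ : ℕ∞) f)
    (I : Idx m 2) (x : Fin m → ℝ) :
    ∑ i, ∑ j, (if idx2 i j = I then (nij i j)⁻¹ * pd j (pd i f) x else 0) = pdI I.1 f x :=
  sum_sum_ite_idx2_eq I (g := fun I => pdI I.1 f x) fun i j => by rw [pdI_idx2 hf]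

lemma sum_pd_sum_inv_nij_pd {q : Idx m 2 → (Fin m → ℝ) → ℝ}
    (hq : ∀ I, ContDiff ℝ (⊤ : ℕ∞) (q I)) (x : Fin m → ℝ) :
    ∑ i, pd i (fun y => ∑ j, (nij i j)⁻¹ * pd j (q (idx2 i j)) y) x
      = ∑ I, pdI I.1 (q I) x := by
  have hdiff : ∀ I j, Differentiable ℝ (pd j (q I)) := fun I j =>
    (contDiff_pd (hq I) j).differentiable (by simp)
  calc ∑ i, pd i (fun y => ∑ j, (nij i j)⁻¹ * pd j (q (idx2 i j)) y) x
      = ∑ i, ∑ j, (nij i j)⁻¹ * pd i (pd j (q (idx2 i j))) x := by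
        refine Finset.sum_congr rfl fun i _ => ?_
        rw [pd_fun_sum fun j _ => ((hdiff _ j).const_mul _) x]
        exact Finset.sum_congr rfl fun j _ => pd_const_mul (hdiff _ j x) _ i
    _ = ∑ i, ∑ j, (nij i j)⁻¹ * pdI (idx2 i j).1 (q (idx2 i j)) x := by
        simp only [pdI_idx2 (hq _), pd_comm (hq _)]
    _ = ∑ I, pdI I.1 (q I) x := sum_sum_inv_nij_mul_idx2 fun I => pdI I.1 (q I) x

end PartialDerivatives

section EulerLagrange

variable {m n : ℕ}

lemma contDiff_fderiv_apply {E : Type*} [NormedAddCommGroup E] [NormedSpace ℝ E]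
    {G : E → ℝ} (hG : ContDiff ℝ (⊤ : ℕ∞) G) (e : E) :
    ContDiff ℝ (⊤ : ℕ∞) (fun a => fderiv ℝ G a e) :=
  (hG.fderiv_right (WithTop.coe_le_coe.2 le_top)).clm_apply contDiff_const

lemma contDiff_component {φ : (Fin m → ℝ) → Fin n → ℝ} (hφ : ContDiff ℝ (⊤ : ℕ∞) φ)
    (α : Fin n) : ContDiff ℝ (⊤ : ℕ∞) (fun y => φ y α) :=
  contDiff_pi.1 hφ α

lemma contDiff_jet2 {φ : (Fin m → ℝ) → Fin n → ℝ} (hφ : ContDiff ℝ (⊤ : ℕ∞) φ) :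
    ContDiff ℝ (⊤ : ℕ∞) (jet2 φ) :=
  contDiff_id.prodMk <| hφ.prodMk <|
    (contDiff_pi.2 fun i => contDiff_pi.2 fun α => contDiff_pd (contDiff_component hφ α) i).prodMk
    (contDiff_pi.2 fun I => contDiff_pi.2 fun α => contDiff_pdI (contDiff_component hφ α) I.1)

def momentum (L : J2 m n → ℝ) (φ : (Fin m → ℝ) → Fin n → ℝ) (i : Fin m) (α : Fin n) :
    (Fin m → ℝ) → ℝ := fun y =>
  dU1 i α L (jet2 φ y) - ∑ j, (nij i j)⁻¹ * pd j (fun z => dU2 (idx2 i j) α L (jet2 φ z)) y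

lemma contDiff_momentum {L : J2 m n → ℝ} (hL : ContDiff ℝ (⊤ : ℕ∞) L)
    {φ : (Fin m → ℝ) → Fin n → ℝ} (hφ : ContDiff ℝ (⊤ : ℕ∞) φ) (i : Fin m) (α : Fin n) :
    ContDiff ℝ (⊤ : ℕ∞) (momentum L φ i α) :=
  ((contDiff_fderiv_apply hL _).comp (contDiff_jet2 hφ)).sub <| ContDiff.sum fun j _ =>
    contDiff_const.mul (contDiff_pd ((contDiff_fderiv_apply hL _).comp (contDiff_jet2 hφ)) j)

lemma EL_eq_sub_sum_pd_momentum {L : J2 m n → ℝ} (hL : ContDiff ℝ (⊤ : ℕ∞) L)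
    {φ : (Fin m → ℝ) → Fin n → ℝ} (hφ : ContDiff ℝ (⊤ : ℕ∞) φ) (α : Fin n) (x : Fin m → ℝ) :
    EL L φ α x = dU α L (jet2 φ x) - ∑ i, pd i (momentum L φ i α) x := by
  have hq : ∀ I, ContDiff ℝ (⊤ : ℕ∞) (fun z => dU2 I α L (jet2 φ z)) := fun I =>
    (contDiff_fderiv_apply hL _).comp (contDiff_jet2 hφ)
  have hD1 : ∀ i, DifferentiableAt ℝ (fun z => dU1 i α L (jet2 φ z)) x := fun i =>
    ((contDiff_fderiv_apply hL _).comp (contDiff_jet2 hφ)).differentiable (by simp) x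
  have hS : ∀ i, DifferentiableAt ℝ
      (fun y => ∑ j, (nij i j)⁻¹ * pd j (fun z => dU2 (idx2 i j) α L (jet2 φ z)) y) x :=
    fun i => (ContDiff.sum fun j _ => contDiff_const.mul (contDiff_pd (hq _) j)).differentiable
      (by simp) x
  have hdiv : ∀ i, pd i (momentum L φ i α) x
      = pd i (fun z => dU1 i α L (jet2 φ z)) x
        - pd i (fun y => ∑ j, (nij i j)⁻¹ * pd j (fun z => dU2 (idx2 i j) α L (jet2 φ z)) y) x :=
    fun i => pd_fun_sub (hD1 i) (hS i) i
  rw [EL, Finset.sum_congr rfl fun i _ => hdiv i, Finset.sum_sub_distrib,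
    sum_pd_sum_inv_nij_pd hq]
  ring

end EulerLagrange

section Hamiltonian

variable {m n : ℕ}

def Pb.toPf (v : Pb m n) : Pf m n := (v.1, v.2.1, v.2.2.1, v.2.2.2.2)

def FiberDerivRightInverse (L : J2 m n → ℝ) (f : Pf m n → (Idx m 2 → Fin n → ℝ)) : Prop :=
  ∀ (b : Pf m n) (K : Idx m 2) (α : Fin n), dU2 K α L (b.1, b.2.1, b.2.2.1, f b) = b.2.2.2 K α

def Pb.toJ2 (f : Pf m n → (Idx m 2 → Fin n → ℝ)) (v : Pb m n) : J2 m n :=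
  (v.1, v.2.1, v.2.2.1, f v.toPf)

lemma J2.eq_add_sum_smul_eU2 (a : Fin m → ℝ) (b : Fin n → ℝ) (c : Fin m → Fin n → ℝ)
    (d : Idx m 2 → Fin n → ℝ) :
    ((a, b, c, d) : J2 m n) = (a, b, c, 0) + ∑ β, ∑ K, d K β • eU2 K β := by
  ext <;> simp [eU2, Prod.fst_sum, Prod.snd_sum, Finset.sum_apply, Pi.single_apply]

lemma J2.clm_apply (ℓ : J2 m n →L[ℝ] ℝ) (a : Fin m → ℝ) (b : Fin n → ℝ)
    (c : Fin m → Fin n → ℝ) (d : Idx m 2 → Fin n → ℝ) :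
    ℓ (a, b, c, d) = ℓ (a, b, c, 0) + ∑ β, ∑ K, d K β * ℓ (eU2 K β) := by
  simp [J2.eq_add_sum_smul_eU2 a b c d, map_sum]

lemma hasDerivAt_add_mul (a b : ℝ) : HasDerivAt (fun t : ℝ => a + t * b) b 0 := by
  simpa using ((hasDerivAt_id (0 : ℝ)).mul_const b).const_add a

lemma hasDerivAt_add_smul {E : Type*} [NormedAddCommGroup E] [NormedSpace ℝ E] (v e : E) :
    HasDerivAt (fun t : ℝ => v + t • e) e 0 := by
  simpa using ((hasDerivAt_id (0 : ℝ)).smul_const e).const_add v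

lemma DifferentiableAt.hasDerivAt_line {E F : Type*} [NormedAddCommGroup E] [NormedSpace ℝ E]
    [NormedAddCommGroup F] [NormedSpace ℝ F] {g : E → F} {v : E} (hg : DifferentiableAt ℝ g v)
    (e : E) : HasDerivAt (fun t : ℝ => g (v + t • e)) (fderiv ℝ g v e) 0 := by
  simpa [Function.comp_def] using
    hg.hasFDerivAt.comp_hasDerivAt_of_eq 0 (hasDerivAt_add_smul v e) (by simp)

lemma differentiable_Ham {L : J2 m n → ℝ} (hL : Differentiable ℝ L)
    {f : Pf m n → (Idx m 2 → Fin n → ℝ)} (hf : Differentiable ℝ f) :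
    Differentiable ℝ (Ham L f) := by
  unfold Ham
  fun_prop

lemma hasDerivAt_Ham_line {L : J2 m n → ℝ} (hL : Differentiable ℝ L)
    {f : Pf m n → (Idx m 2 → Fin n → ℝ)} (hf : Differentiable ℝ f) (v e : Pb m n) :
    HasDerivAt (fun t : ℝ => Ham L f (v + t • e))
      ((∑ α, ∑ i, (e.2.2.2.1 i α * v.2.2.1 i α + v.2.2.2.1 i α * e.2.2.1 i α))
        + (∑ α, ∑ I, (e.2.2.2.2 I α * f v.toPf I α
            + v.2.2.2.2 I α * fderiv ℝ f v.toPf e.toPf I α))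
        - fderiv ℝ L (v.toJ2 f) (e.1, e.2.1, e.2.2.1, fderiv ℝ f v.toPf e.toPf)) 0 := by
  have hF := (hf v.toPf).hasDerivAt_line e.toPf
  have hFc : ∀ I α, HasDerivAt (fun t : ℝ => f (v.toPf + t • e.toPf) I α)
      (fderiv ℝ f v.toPf e.toPf I α) 0 := fun I α =>
    hasDerivAt_pi.1 (hasDerivAt_pi.1 hF I) α
  have hγ : HasDerivAt (fun t : ℝ => (v.1 + t • e.1, v.2.1 + t • e.2.1, v.2.2.1 + t • e.2.2.1,
      f (v.toPf + t • e.toPf))) (e.1, e.2.1, e.2.2.1, fderiv ℝ f v.toPf e.toPf) 0 :=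
    (hasDerivAt_add_smul _ _).prodMk ((hasDerivAt_add_smul _ _).prodMk
      ((hasDerivAt_add_smul _ _).prodMk hF))
  have hLγ := (hL (v.toJ2 f)).hasFDerivAt.comp_hasDerivAt_of_eq 0 hγ (by simp [Pb.toJ2])
  have hH := ((HasDerivAt.fun_sum (u := Finset.univ) fun α _ =>
    HasDerivAt.fun_sum (u := Finset.univ) fun i _ =>
      (hasDerivAt_add_mul (v.2.2.2.1 i α) (e.2.2.2.1 i α)).fun_mul
        (hasDerivAt_add_mul (v.2.2.1 i α) (e.2.2.1 i α))).fun_add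
    (HasDerivAt.fun_sum (u := Finset.univ) fun α _ =>
      HasDerivAt.fun_sum (u := Finset.univ) fun I _ =>
        (hasDerivAt_add_mul (v.2.2.2.2 I α) (e.2.2.2.2 I α)).fun_mul (hFc I α))).fun_sub hLγ
  refine (hH.congr_deriv ?_).congr_of_eventuallyEq (Filter.Eventually.of_forall fun t => ?_)
  · simp [Pb.toPf]
  · simp [Ham, Pb.toPf]

/-- Since `∂L/∂u_I = p^I` at `u_I = f(x, u, uᵢ, p^I)`, the derivative of `f` drops out. -/
lemma fderiv_Ham_apply {L : J2 m n → ℝ} (hL : Differentiable ℝ L)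
    {f : Pf m n → (Idx m 2 → Fin n → ℝ)} (hf : Differentiable ℝ f)
    (hf1 : FiberDerivRightInverse L f) (v e : Pb m n) :
    fderiv ℝ (Ham L f) v e
      = (∑ α, ∑ i, (e.2.2.2.1 i α * v.2.2.1 i α + v.2.2.2.1 i α * e.2.2.1 i α))
        + (∑ α, ∑ I, e.2.2.2.2 I α * f v.toPf I α)
        - fderiv ℝ L (v.toJ2 f) (e.1, e.2.1, e.2.2.1, 0) := by
  have hp2 : ∀ K β, fderiv ℝ L (v.toJ2 f) (eU2 K β) = v.2.2.2.2 K β := fun K β => hf1 v.toPf K β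
  rw [((differentiable_Ham hL hf v).hasDerivAt_line e).unique (hasDerivAt_Ham_line hL hf v e),
    J2.clm_apply]
  simp only [Finset.sum_add_distrib, hp2, mul_comm]
  ring

lemma fderiv_Ham_eP1 {L : J2 m n → ℝ} (hL : Differentiable ℝ L)
    {f : Pf m n → (Idx m 2 → Fin n → ℝ)} (hf : Differentiable ℝ f)
    (hf1 : FiberDerivRightInverse L f) (v : Pb m n) (i : Fin m) (α : Fin n) :
    fderiv ℝ (Ham L f) v (eP1 i α) = v.2.2.1 i α := by
  simp [fderiv_Ham_apply hL hf hf1, eP1, Pi.single_apply, ite_apply, Prod.mk_zero_zero]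

lemma fderiv_Ham_eP2 {L : J2 m n → ℝ} (hL : Differentiable ℝ L)
    {f : Pf m n → (Idx m 2 → Fin n → ℝ)} (hf : Differentiable ℝ f)
    (hf1 : FiberDerivRightInverse L f) (v : Pb m n) (I : Idx m 2) (α : Fin n) :
    fderiv ℝ (Ham L f) v (eP2 I α) = f v.toPf I α := by
  simp [fderiv_Ham_apply hL hf hf1, eP2, Pi.single_apply, ite_apply, Prod.mk_zero_zero]

lemma fderiv_Ham_ePU {L : J2 m n → ℝ} (hL : Differentiable ℝ L)
    {f : Pf m n → (Idx m 2 → Fin n → ℝ)} (hf : Differentiable ℝ f)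
    (hf1 : FiberDerivRightInverse L f) (v : Pb m n) (α : Fin n) :
    fderiv ℝ (Ham L f) v (ePU α) = - dU α L (v.toJ2 f) := by
  simp [fderiv_Ham_apply hL hf hf1, ePU, dU, eU]

lemma fderiv_Ham_ePU1 {L : J2 m n → ℝ} (hL : Differentiable ℝ L)
    {f : Pf m n → (Idx m 2 → Fin n → ℝ)} (hf : Differentiable ℝ f)
    (hf1 : FiberDerivRightInverse L f) (v : Pb m n) (i : Fin m) (α : Fin n) :
    fderiv ℝ (Ham L f) v (ePU1 i α) = v.2.2.2.1 i α - dU1 i α L (v.toJ2 f) := by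
  simp [fderiv_Ham_apply hL hf hf1, ePU1, dU1, eU1, Pi.single_apply, ite_apply, Prod.mk_zero_zero]

end Hamiltonian

section HamiltonDeDonderWeyl

variable {m n : ℕ}

lemma toJ2_sec_eq_jet2 {f : Pf m n → (Idx m 2 → Fin n → ℝ)} {φ : (Fin m → ℝ) → Fin n → ℝ}
    {u1 p1 : Fin m → Fin n → (Fin m → ℝ) → ℝ} {p2 : Idx m 2 → Fin n → (Fin m → ℝ) → ℝ}
    {x : Fin m → ℝ} (hu1 : ∀ i α, u1 i α x = pd i (fun y => φ y α) x)
    (hf : ∀ I α, f (sec φ u1 p1 p2 x).toPf I α = pdI I.1 (fun y => φ y α) x) :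
    (sec φ u1 p1 p2 x).toJ2 f = jet2 φ x := by
  rw [Pb.toJ2, funext₂ hf]
  simp only [sec, jet2, hu1]

lemma toJ2_sec_eq_jet2_of_hdw {f : Pf m n → (Idx m 2 → Fin n → ℝ)}
    {φ : (Fin m → ℝ) → Fin n → ℝ} (hφ : ContDiff ℝ (⊤ : ℕ∞) φ)
    {u1 p1 : Fin m → Fin n → (Fin m → ℝ) → ℝ} {p2 : Idx m 2 → Fin n → (Fin m → ℝ) → ℝ}
    {x : Fin m → ℝ} (h1 : ∀ y i α, pd i (fun z => φ z α) y = u1 i α y)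
    (h2 : ∀ I α, (∑ i, ∑ j, if idx2 i j = I then (nij i j)⁻¹ * pd j (u1 i α) x else 0)
      = f (sec φ u1 p1 p2 x).toPf I α) :
    (sec φ u1 p1 p2 x).toJ2 f = jet2 φ x := by
  have hu1 : ∀ i α, u1 i α = pd i (fun z => φ z α) := fun i α => funext fun y => (h1 y i α).symm
  refine toJ2_sec_eq_jet2 (fun i α => (h1 x i α).symm) fun I α => ?_
  rw [← h2]
  simp only [hu1]
  exact sum_sum_ite_idx2_pd_pd (contDiff_component hφ α) I x

lemma p1_eq_momentum_of_hdw {L : J2 m n → ℝ} {f : Pf m n → (Idx m 2 → Fin n → ℝ)}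
    (hf1 : FiberDerivRightInverse L f) {φ : (Fin m → ℝ) → Fin n → ℝ}
    {u1 p1 : Fin m → Fin n → (Fin m → ℝ) → ℝ} {p2 : Idx m 2 → Fin n → (Fin m → ℝ) → ℝ}
    (hjet : ∀ y, (sec φ u1 p1 p2 y).toJ2 f = jet2 φ y)
    (h4 : ∀ y i α, ∑ j, (nij i j)⁻¹ * pd j (p2 (idx2 i j) α) y
      = dU1 i α L ((sec φ u1 p1 p2 y).toJ2 f) - p1 i α y) :
    p1 = momentum L φ := by
  have hp2 : ∀ I α, p2 I α = fun y => dU2 I α L (jet2 φ y) := fun I α =>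
    funext fun y => by rw [← hjet y]; exact (hf1 (sec φ u1 p1 p2 y).toPf I α).symm
  funext i α y
  have := h4 y i α
  simp only [hjet y, hp2] at this
  simp only [momentum]
  linarith

end HamiltonDeDonderWeyl

/-- `φ` satisfies the Euler–Lagrange field equations of `L` iff there are
smooth functions `u₁, p₁, p₂` solving the Hamilton–De Donder–Weyl equations of the
Hamiltonian `H` built from a two-sided fiber inverse `f` of the Legendre fiber map. -/
theorem statement8 (m n : ℕ) (L : J2 m n → ℝ) (hL : ContDiff ℝ (⊤ : ℕ∞) L)
    (f : Pf m n → (Idx m 2 → Fin n → ℝ)) (hf : ContDiff ℝ (⊤ : ℕ∞) f)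
    (hf1 : ∀ (b : Pf m n) (K : Idx m 2) (α : Fin n),
      dU2 K α L (b.1, b.2.1, b.2.2.1, f b) = b.2.2.2 K α)
    (hf2 : ∀ (x : Fin m → ℝ) (u : Fin n → ℝ) (u1 : Fin m → Fin n → ℝ)
        (w : Idx m 2 → Fin n → ℝ) (I : Idx m 2) (α : Fin n),
      f (x, u, u1, fun K β => dU2 K β L (x, u, u1, w)) I α = w I α)
    (φ : (Fin m → ℝ) → Fin n → ℝ) (hφ : ContDiff ℝ (⊤ : ℕ∞) φ) :
    (∀ (α : Fin n) (x : Fin m → ℝ), EL L φ α x = 0)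
      ↔ ∃ (u1 : Fin m → Fin n → (Fin m → ℝ) → ℝ)
          (p1 : Fin m → Fin n → (Fin m → ℝ) → ℝ)
          (p2 : Idx m 2 → Fin n → (Fin m → ℝ) → ℝ),
          (∀ i α, ContDiff ℝ (⊤ : ℕ∞) (u1 i α)) ∧
          (∀ i α, ContDiff ℝ (⊤ : ℕ∞) (p1 i α)) ∧
          (∀ I α, ContDiff ℝ (⊤ : ℕ∞) (p2 I α)) ∧
          ∀ x : Fin m → ℝ,
            (∀ (i : Fin m) (α : Fin n),
              pd i (fun y => φ y α) x
                = fderiv ℝ (Ham L f) (sec φ u1 p1 p2 x) (eP1 i α)) ∧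
            (∀ (I : Idx m 2) (α : Fin n),
              (∑ i, ∑ j, if idx2 i j = I then (nij i j)⁻¹ * pd j (u1 i α) x else 0)
                = fderiv ℝ (Ham L f) (sec φ u1 p1 p2 x) (eP2 I α)) ∧
            (∀ α : Fin n,
              (∑ i, pd i (p1 i α) x)
                = - fderiv ℝ (Ham L f) (sec φ u1 p1 p2 x) (ePU α)) ∧
            (∀ (i : Fin m) (α : Fin n),
              (∑ j, (nij i j)⁻¹ * pd j (p2 (idx2 i j) α) x)
                = - fderiv ℝ (Ham L f) (sec φ u1 p1 p2 x) (ePU1 i α)) := by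
  have hLd : Differentiable ℝ L := hL.differentiable (by simp)
  have hfd : Differentiable ℝ f := hf.differentiable (by simp)
  simp only [fderiv_Ham_eP1 hLd hfd hf1, fderiv_Ham_eP2 hLd hfd hf1, fderiv_Ham_ePU hLd hfd hf1,
    fderiv_Ham_ePU1 hLd hfd hf1, neg_neg, neg_sub]
  constructor
  · intro hEL
    refine ⟨fun i α => pd i (fun y => φ y α), momentum L φ, fun I α y => dU2 I α L (jet2 φ y),
      fun i α => contDiff_pd (contDiff_component hφ α) i, contDiff_momentum hL hφ,
      fun I α => (contDiff_fderiv_apply hL _).comp (contDiff_jet2 hφ), fun x => ?_⟩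
    have hfjet : ∀ I α, f (sec φ (fun i α => pd i (fun y => φ y α)) (momentum L φ)
        (fun I α y => dU2 I α L (jet2 φ y)) x).toPf I α = pdI I.1 (fun y => φ y α) x :=
      hf2 x (φ x) (fun i α => pd i (fun y => φ y α) x) (fun I α => pdI I.1 (fun y => φ y α) x)
    rw [toJ2_sec_eq_jet2 (fun _ _ => rfl) hfjet]
    refine ⟨fun i α => rfl, fun I α => ?_, fun α => ?_, fun i α => ?_⟩
    · rw [hfjet]
      exact sum_sum_ite_idx2_pd_pd (contDiff_component hφ α) I x
    · linarith [hEL α x, EL_eq_sub_sum_pd_momentum hL hφ α x]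
    · simp only [sec, momentum]
      ring
  · rintro ⟨u1, p1, p2, -, -, -, hHDW⟩ α x
    have hjet : ∀ y, (sec φ u1 p1 p2 y).toJ2 f = jet2 φ y := fun y =>
      toJ2_sec_eq_jet2_of_hdw hφ (fun y => (hHDW y).1) (hHDW y).2.1
    have hp1 := p1_eq_momentum_of_hdw hf1 hjet fun y => (hHDW y).2.2.2
    rw [EL_eq_sub_sum_pd_momentum hL hφ, ← hjet x, ← (hHDW x).2.2.1 α, hp1, sub_self]
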